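/- Kernel of the linearized operator: Let M_Ω be the equilibrium density with orientation Ω₀ and define L g = div_v{ M_Ω ∇_v( g/M_Ω − c₀⁻¹ (P_{Ω₀⊥}v)·(P_{Ω₀⊥} j_g) ) } with j_g = ∫ v g dv and c₀ = ∫ (v·Ω₀) M_Ω dv (assumed to satisfy ∫ v ⊗ v_⊥ M_Ω dv = c₀ P_{Ω₀⊥}). Then every function of the form g = ρ M_Ω + c₀⁻¹ (v_⊥ · u) M_Ω, with ρ ∈ ℝ and u ∈ (ℝΩ₀)^⊥, satisfies L g = 0. -/

import Mathlib

open MeasureTheory Real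
open scoped RealInnerProductSpace BigOperators

noncomputable section

/-- The divergence of a vector field `F` at `v`. -/
def eDiv {d : ℕ} (F : EuclideanSpace ℝ (Fin d) → EuclideanSpace ℝ (Fin d))
    (v : EuclideanSpace ℝ (Fin d)) : ℝ :=
  ∑ i, fderiv ℝ F v (EuclideanSpace.single i (1 : ℝ)) i


/-!
The equilibrium `M_Ω` is invariant under the reflection through `ℝ Ω₀`, so its first moment is a
multiple of `Ω₀` and is killed by `P`. By the moment identity the perturbation
`c₀⁻¹ (v_⊥ · u) M_Ω` carries the current `u`, hence `P j_g = u` and the potential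
`g / M_Ω - c₀⁻¹ v_⊥ · P j_g` is the constant `ρ`: its gradient, and so the flux, vanish.
The quartic confinement in `M_Ω` makes every moment involved integrable.
-/

section Equilibrium

variable {E : Type*} [NormedAddCommGroup E]

def equilibrium (Ω₀ : E) (α β Z : ℝ) (v : E) : ℝ :=
  Z⁻¹ * rexp (-(‖v - Ω₀‖ ^ 2 / 2 + β * ‖v‖ ^ 4 / 4 - α * ‖v‖ ^ 2 / 2))

variable {Ω₀ : E} {α β Z : ℝ}

theorem equilibrium_pos (hZ : 0 < Z) (v : E) : 0 < equilibrium Ω₀ α β Z v := by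
  unfold equilibrium; positivity

theorem continuous_equilibrium : Continuous (equilibrium Ω₀ α β Z) := by
  unfold equilibrium; fun_prop

theorem equilibrium_comp_linearIsometryEquiv [NormedSpace ℝ E] (R : E ≃ₗᵢ[ℝ] E) (hR : R Ω₀ = Ω₀)
    (v : E) :
    equilibrium Ω₀ α β Z (R v) = equilibrium Ω₀ α β Z v := by
  have hsub : ‖R v - Ω₀‖ = ‖v - Ω₀‖ := by rw [← R.norm_map (v - Ω₀), map_sub, hR]
  simp only [equilibrium, R.norm_map, hsub]

/-- The constant is the maximum of `(2 + α / 2) s - β s ^ 2 / 4` over `s`. -/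
theorem one_add_mul_exp_quartic_le (hβ : 0 < β) (s : ℝ) :
    (1 + s) * rexp (α / 2 * s - β / 4 * s ^ 2) ≤ rexp ((2 + α / 2) ^ 2 / β) * rexp (-s) := by
  have hlin : 1 + s ≤ rexp s := by linarith [Real.add_one_le_exp s]
  have hquad : (2 + α / 2) * s - β / 4 * s ^ 2 ≤ (2 + α / 2) ^ 2 / β := by
    rw [le_div_iff₀ hβ]; nlinarith [sq_nonneg (β * s - 2 * (2 + α / 2))]
  calc (1 + s) * rexp (α / 2 * s - β / 4 * s ^ 2)
      ≤ rexp s * rexp (α / 2 * s - β / 4 * s ^ 2) := by gcongr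
    _ ≤ rexp ((2 + α / 2) ^ 2 / β) * rexp (-s) := by
      rw [← Real.exp_add, ← Real.exp_add, Real.exp_le_exp]; linarith

theorem equilibrium_mul_one_add_sq_le (hβ : 0 < β) (hZ : 0 ≤ Z) (v : E) :
    equilibrium Ω₀ α β Z v * (1 + ‖v‖ ^ 2)
      ≤ Z⁻¹ * rexp ((2 + α / 2) ^ 2 / β) * rexp (-‖v‖ ^ 2) := by
  have hexp : rexp (-(‖v - Ω₀‖ ^ 2 / 2 + β * ‖v‖ ^ 4 / 4 - α * ‖v‖ ^ 2 / 2))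
      ≤ rexp (α / 2 * ‖v‖ ^ 2 - β / 4 * (‖v‖ ^ 2) ^ 2) := by
    gcongr; nlinarith [sq_nonneg ‖v - Ω₀‖]
  calc equilibrium Ω₀ α β Z v * (1 + ‖v‖ ^ 2)
      = Z⁻¹ * ((1 + ‖v‖ ^ 2)
          * rexp (-(‖v - Ω₀‖ ^ 2 / 2 + β * ‖v‖ ^ 4 / 4 - α * ‖v‖ ^ 2 / 2))) := by
        rw [equilibrium]; ring
    _ ≤ Z⁻¹ * ((1 + ‖v‖ ^ 2) * rexp (α / 2 * ‖v‖ ^ 2 - β / 4 * (‖v‖ ^ 2) ^ 2)) := by gcongr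
    _ ≤ Z⁻¹ * (rexp ((2 + α / 2) ^ 2 / β) * rexp (-‖v‖ ^ 2)) :=
        mul_le_mul_of_nonneg_left (one_add_mul_exp_quartic_le hβ _) (inv_nonneg.2 hZ)
    _ = _ := by ring

variable [InnerProductSpace ℝ E] [FiniteDimensional ℝ E] [MeasurableSpace E] [BorelSpace E]

theorem integrable_exp_neg_norm_sq : Integrable fun v : E => rexp (-‖v‖ ^ 2) := by
  refine (GaussianFourier.integrable_cexp_neg_mul_sq_norm_add (V := E) (b := 1) (by norm_num)
    0 0).norm.congr (Filter.Eventually.of_forall fun v => ?_)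
  simp [Complex.norm_exp, ← Complex.ofReal_pow]

theorem integrable_equilibrium_smul {F : Type*} [NormedAddCommGroup F] [NormedSpace ℝ F]
    (hβ : 0 < β) (hZ : 0 ≤ Z) {f : E → F} (hf : Continuous f) {K : ℝ}
    (hfK : ∀ v, ‖f v‖ ≤ K * (1 + ‖v‖ ^ 2)) :
    Integrable fun v => equilibrium Ω₀ α β Z v • f v := by
  have hM : ∀ v, 0 ≤ equilibrium Ω₀ α β Z v := fun v => by unfold equilibrium; positivity
  have hK : 0 ≤ K := by simpa using (norm_nonneg _).trans (hfK 0)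
  refine ((integrable_exp_neg_norm_sq.const_mul (Z⁻¹ * rexp ((2 + α / 2) ^ 2 / β))).const_mul K
    |>.mono' (continuous_equilibrium.smul hf).aestronglyMeasurable
    (Filter.Eventually.of_forall fun v => ?_))
  rw [norm_smul, Real.norm_of_nonneg (hM v)]
  calc equilibrium Ω₀ α β Z v * ‖f v‖
      ≤ K * (equilibrium Ω₀ α β Z v * (1 + ‖v‖ ^ 2)) := by
        rw [mul_left_comm]; exact mul_le_mul_of_nonneg_left (hfK v) (hM v)
    _ ≤ _ := mul_le_mul_of_nonneg_left (equilibrium_mul_one_add_sq_le hβ hZ v) hK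

theorem integral_smul_self_mem_of_reflection_invariant (K : Submodule ℝ E) {f : E → ℝ}
    (hf : ∀ v, f (K.reflection v) = f v) :
    ∫ v, f v • v ∈ K := by
  rw [← Submodule.reflection_eq_self_iff]
  calc K.reflection (∫ v, f v • v) = ∫ v, K.reflection (f v • v) :=
        (K.reflection.toLinearIsometry.integral_comp_comm _).symm
    _ = ∫ v, f v • K.reflection v := by simp only [map_smul]
    _ = ∫ v, f (K.reflection v) • K.reflection v := by simp only [hf]
    _ = ∫ v, f v • v :=
        K.reflection.measurePreserving.integral_comp
          K.reflection.toHomeomorph.measurableEmbedding (fun v => f v • v)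

theorem integral_equilibrium_smul_self_mem_span :
    ∫ v, equilibrium Ω₀ α β Z v • v ∈ ℝ ∙ Ω₀ :=
  integral_smul_self_mem_of_reflection_invariant _ <| equilibrium_comp_linearIsometryEquiv _ <|
    Submodule.reflection_mem_subspace_eq_self (Submodule.mem_span_singleton_self Ω₀)

theorem integrable_equilibrium_smul_self (hβ : 0 < β) (hZ : 0 ≤ Z) :
    Integrable fun v => equilibrium Ω₀ α β Z v • v :=
  integrable_equilibrium_smul hβ hZ continuous_id (K := 1) fun v => by
    nlinarith [sq_nonneg (‖v‖ - 1)]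

theorem integrable_equilibrium_smul_inner_smul_self (hβ : 0 < β) (hZ : 0 ≤ Z) (w : E) :
    Integrable fun v => equilibrium Ω₀ α β Z v • (⟪v, w⟫ • v) :=
  integrable_equilibrium_smul hβ hZ (by fun_prop) (K := ‖w‖) fun v => by
    rw [norm_smul, Real.norm_eq_abs]
    nlinarith [abs_real_inner_le_norm v w, norm_nonneg w, norm_nonneg v, abs_nonneg ⟪v, w⟫]

end Equilibrium

theorem kernel_of_linearized_general (d : ℕ)
    (Ω₀ : EuclideanSpace ℝ (Fin d)) (hΩ₀ : ‖Ω₀‖ = 1)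
    (α β Z c₀ : ℝ) (hβ : 0 < β) (hZ : 0 < Z)
    (M : EuclideanSpace ℝ (Fin d) → ℝ)
    (hM : ∀ v, M v = Z⁻¹ * Real.exp (-(‖v - Ω₀‖ ^ 2 / 2 + β * ‖v‖ ^ 4 / 4 - α * ‖v‖ ^ 2 / 2)))
    (P : EuclideanSpace ℝ (Fin d) → EuclideanSpace ℝ (Fin d))
    (hP : ∀ w, P w = w - ⟪w, Ω₀⟫ • Ω₀)
    (hc₀pos : 0 < c₀)
    (hmom : ∀ w : EuclideanSpace ℝ (Fin d), ∫ v, (⟪P v, w⟫ * M v) • v = c₀ • P w)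
    (ρ : ℝ) (u : EuclideanSpace ℝ (Fin d)) (hu : ⟪u, Ω₀⟫ = 0)
    (g : EuclideanSpace ℝ (Fin d) → ℝ)
    (hg : ∀ v, g v = ρ * M v + c₀⁻¹ * ⟪P v, u⟫ * M v)
    (jg : EuclideanSpace ℝ (Fin d)) (hjg : jg = ∫ v, g v • v) :
    ∀ v, eDiv (fun w => M w • gradient (fun z => g z / M z - c₀⁻¹ * ⟪P z, P jg⟫) w) v
      = 0 := by
  obtain rfl : M = equilibrium Ω₀ α β Z := funext hM
  obtain ⟨c, hc⟩ := Submodule.mem_span_singleton.mp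
    (integral_equilibrium_smul_self_mem_span (Ω₀ := Ω₀) (α := α) (β := β) (Z := Z))
  have hPu : P u = u := by rw [hP, hu, zero_smul, sub_zero]
  have hPv : ∀ v, ⟪P v, u⟫ = ⟪v, u⟫ := fun v => by
    rw [hP, inner_sub_left, real_inner_smul_left, real_inner_comm u Ω₀, hu, mul_zero, sub_zero]
  have hflux_eq : ∫ v, equilibrium Ω₀ α β Z v • (⟪v, u⟫ • v) = c₀ • u := by
    simpa only [hPv, hPu, smul_smul, mul_comm] using hmom u
  have hjg' : jg = ρ • (c • Ω₀) + u := by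
    have hsplit : (fun v => g v • v) = fun v =>
        ρ • (equilibrium Ω₀ α β Z v • v) + c₀⁻¹ • (equilibrium Ω₀ α β Z v • (⟪v, u⟫ • v)) := by
      funext v; rw [hg, hPv]; module
    rw [hjg, hsplit, integral_add
      (by exact (integrable_equilibrium_smul_self hβ hZ.le).smul ρ)
      (by exact (integrable_equilibrium_smul_inner_smul_self hβ hZ.le u).smul c₀⁻¹),
      integral_smul, integral_smul, hflux_eq, hc, smul_smul, inv_mul_cancel₀ hc₀pos.ne', one_smul]
  have hPjg : P jg = u := by
    rw [hP, hjg', inner_add_left, hu, real_inner_smul_left, real_inner_smul_left,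
      real_inner_self_eq_norm_sq, hΩ₀]
    module
  have hpot : (fun z => g z / equilibrium Ω₀ α β Z z - c₀⁻¹ * ⟪P z, P jg⟫) = fun _ => ρ := by
    funext z
    rw [hPjg, hg, ← add_mul, mul_div_cancel_right₀ _ (equilibrium_pos hZ z).ne']
    ring
  intro v
  simp [hpot, eDiv]

/-- Kernel of the linearized operator. With
L g = div_v{ M ∇_v( g/M − c₀⁻¹ (P v)·(P j_g) ) }, c₀ = ∫ (v·Ω₀) M dv, and the symmetry
identity ∫ v ⊗ v_⊥ M dv = c₀ P_{Ω₀⊥}, every g = ρ M + c₀⁻¹ (v_⊥·u) M with u ⊥ Ω₀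
satisfies L g = 0. -/
theorem kernel_of_linearized (d : ℕ) (hd : 2 ≤ d)
    (Ω₀ : EuclideanSpace ℝ (Fin d)) (hΩ₀ : ‖Ω₀‖ = 1)
    (α β Z c₀ : ℝ) (hα : 0 < α) (hβ : 0 < β) (hZ : 0 < Z)
    (M : EuclideanSpace ℝ (Fin d) → ℝ)
    (hM : ∀ v, M v = Z⁻¹ * Real.exp (-(‖v - Ω₀‖ ^ 2 / 2 + β * ‖v‖ ^ 4 / 4 - α * ‖v‖ ^ 2 / 2)))
    (P : EuclideanSpace ℝ (Fin d) → EuclideanSpace ℝ (Fin d))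
    (hP : ∀ w, P w = w - ⟪w, Ω₀⟫ • Ω₀)
    (hc₀ : c₀ = ∫ v, ⟪v, Ω₀⟫ * M v) (hc₀pos : 0 < c₀)
    (hmom : ∀ w : EuclideanSpace ℝ (Fin d), ∫ v, (⟪P v, w⟫ * M v) • v = c₀ • P w)
    (ρ : ℝ) (u : EuclideanSpace ℝ (Fin d)) (hu : ⟪u, Ω₀⟫ = 0)
    (g : EuclideanSpace ℝ (Fin d) → ℝ)
    (hg : ∀ v, g v = ρ * M v + c₀⁻¹ * ⟪P v, u⟫ * M v)
    (jg : EuclideanSpace ℝ (Fin d)) (hjg : jg = ∫ v, g v • v) :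
    ∀ v, eDiv (fun w => M w • gradient (fun z => g z / M z - c₀⁻¹ * ⟪P z, P jg⟫) w) v
      = 0 :=
  kernel_of_linearized_general d Ω₀ hΩ₀ α β Z c₀ hβ hZ M hM P hP hc₀pos hmom ρ u hu g hg jg hjg
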